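/- arXiv:1411.1021 — 2 statements merged into one kernel-verified Lean document; each statement's English description precedes it below -/
import Mathlib

section
/- For every instance (G,w) of the concurrent graph sharing game, the first player can guarantee to take vertices of total weight at least 1/3; that is, v(G,w) ≥ 1/3. -/
/-!
Formalization of the concurrent graph sharing game.

An instance is a finite connected simple graph `G` on a finite vertex type `V`
together with vertex weights `w : V → (0,1]` summing to `1`, such that no two
distinct subsets of vertices have the same total weight.

A game history is recorded as a list of the taken vertices, **most recent
first**.  The player-to-move at a history is determined by the history itself:
the first player (1st) moves when his collected weight so far is at most that
of the second player (2nd); by the distinct-subset-sums assumption a tie occurs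
only at the empty history, where indeed 1st begins.  `scores w h` computes the
pair `(w(F), w(S))` of total weights collected by 1st and 2nd along a history.

A strategy is a function from histories to the chosen next vertex; it is legal
if, whenever some legal move exists (a non-taken vertex that is adjacent to a
taken one, or any vertex at the very beginning), it produces a legal move.
`firstScore w σ τ` is the total weight collected by 1st after the complete play
(all `Fintype.card V` vertices taken) in which 1st uses `σ` and 2nd uses `τ`.

`FirstGuarantees G w c` says that 1st has a legal strategy guaranteeing that he
collects total weight at least `c` against every legal strategy of 2nd, and the
value `gameValue G w` is the supremum of all such guarantees `c`.
-/

namespace ConcurrentSharing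

variable {V : Type} [Fintype V]

/-- The pair `(w(F), w(S))` of weights collected by the two players along a
history (most recent vertex first): each vertex is assigned to the player who
was to move, namely 1st iff his score so far is at most 2nd's score. -/
noncomputable def scores (w : V → ℝ) : List V → ℝ × ℝ
  | [] => (0, 0)
  | v :: h =>
    let p := scores w h
    if p.1 ≤ p.2 then (p.1 + w v, p.2) else (p.1, p.2 + w v)

/-- `v` is a legal next move at history `h`: it is not yet taken, and it is
adjacent to some taken vertex (any vertex is legal at the start). -/
def LegalMove (G : SimpleGraph V) (h : List V) (v : V) : Prop :=
  v ∉ h ∧ (h = [] ∨ ∃ u ∈ h, G.Adj u v)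

/-- A strategy (for either player) maps histories to vertices; it is legal if
it produces a legal move whenever a legal move exists. -/
def LegalStrategy (G : SimpleGraph V) (σ : List V → V) : Prop :=
  ∀ h : List V, (∃ v, LegalMove G h v) → LegalMove G h (σ h)

/-- The history after `n` rounds when 1st plays `σ` and 2nd plays `τ`
(the player to move is the one whose collected weight so far is smaller;
at the start, i.e. on a tie, 1st moves). -/
noncomputable def playAux (w : V → ℝ) (σ τ : List V → V) : ℕ → List V
  | 0 => []
  | n + 1 =>
    let h := playAux w σ τ n
    (if (scores w h).1 ≤ (scores w h).2 then σ h else τ h) :: h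

/-- The total weight `w(F)` collected by 1st at the end of the complete play
(all vertices taken) in which 1st plays `σ` and 2nd plays `τ`. -/
noncomputable def firstScore (w : V → ℝ) (σ τ : List V → V) : ℝ :=
  (scores w (playAux w σ τ (Fintype.card V))).1

/-- 1st has a legal strategy collecting total weight at least `c` against
every legal strategy of 2nd. -/
def FirstGuarantees (G : SimpleGraph V) (w : V → ℝ) (c : ℝ) : Prop :=
  ∃ σ : List V → V, LegalStrategy G σ ∧
    ∀ τ : List V → V, LegalStrategy G τ → c ≤ firstScore w σ τ

/-- The value `v(G,w)`: the maximum total weight 1st can guarantee. -/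
noncomputable def gameValue (G : SimpleGraph V) (w : V → ℝ) : ℝ :=
  sSup {c : ℝ | FirstGuarantees G w c}

/-- `(G, w)` is an instance of the concurrent graph sharing game: `G` is
connected, the weights lie in `(0,1]` and sum to `1`, and no two distinct
subsets of vertices have the same total weight. -/
def IsGameInstance (G : SimpleGraph V) (w : V → ℝ) : Prop :=
  G.Connected ∧ (∀ v : V, 0 < w v ∧ w v ≤ 1) ∧ (∑ v : V, w v) = 1 ∧
    ∀ A B : Finset V, A ≠ B → ∑ a ∈ A, w a ≠ ∑ b ∈ B, w b

end ConcurrentSharing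

namespace ConcurrentSharing

variable {V : Type} {G : SimpleGraph V} {w : V → ℝ}

section Scores

variable (w) in
lemma scores_cons (v : V) (h : List V) :
    scores w (v :: h) =
      if (scores w h).1 ≤ (scores w h).2 then ((scores w h).1 + w v, (scores w h).2)
      else ((scores w h).1, (scores w h).2 + w v) := rfl

variable (w) in
lemma scores_fst_add_snd (h : List V) : (scores w h).1 + (scores w h).2 = (h.map w).sum := by
  induction h with
  | nil => simp [scores]
  | cons v h ih =>
    rw [scores_cons]
    split <;> simp only [List.map_cons, List.sum_cons] <;> linarith

lemma scores_snd_nonneg (hw : ∀ v, 0 ≤ w v) (h : List V) : 0 ≤ (scores w h).2 := by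
  induction h with
  | nil => simp [scores]
  | cons v h ih =>
    rw [scores_cons]
    split
    · exact ih
    · linarith [hw v]

lemma scores_fst_le_scores_cons_fst (hw : ∀ v, 0 ≤ w v) (v : V) (h : List V) :
    (scores w h).1 ≤ (scores w (v :: h)).1 := by
  rw [scores_cons]
  split
  · linarith [hw v]
  · exact le_rfl

/-- Each vertex goes to the player who is behind, so the second player can never lead by more
than one vertex weight. -/
lemma scores_snd_le_fst_add (hw : ∀ v, 0 ≤ w v) {m : ℝ} (hm : ∀ v, w v ≤ m) (hm0 : 0 ≤ m)
    (h : List V) : (scores w h).2 ≤ (scores w h).1 + m := by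
  induction h with
  | nil => simpa [scores] using hm0
  | cons v h ih =>
    rw [scores_cons]
    split
    · linarith [hw v]
    · linarith [hm v]

end Scores

section Moves

lemma exists_legalMove [Fintype V] (hG : G.Connected) {h : List V}
    (hlen : h.length < Fintype.card V) : ∃ v, LegalMove G h v := by
  classical
  obtain ⟨x, hx⟩ : ∃ x, x ∉ h := by
    by_contra! hall
    have : Finset.univ ⊆ h.toFinset := fun x _ => List.mem_toFinset.2 (hall x)
    have := (Finset.card_le_card this).trans h.toFinset_card_le
    rw [Finset.card_univ] at this
    omega
  cases h with
  | nil => exact ⟨x, hx, Or.inl rfl⟩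
  | cons u t =>
    obtain ⟨p⟩ := hG.preconnected u x
    obtain ⟨d, -, hd, hd'⟩ := p.exists_boundary_dart {y | y ∈ u :: t} (by simp) hx
    exact ⟨d.toProd.2, hd', Or.inr ⟨d.toProd.1, hd, d.adj⟩⟩

open Classical in
noncomputable def openingStrategy (G : SimpleGraph V) (v₀ : V) : List V → V
  | [] => v₀
  | h@(_ :: _) => if hex : ∃ v, LegalMove G h v then hex.choose else v₀

lemma legalStrategy_openingStrategy (v₀ : V) : LegalStrategy G (openingStrategy G v₀) := by
  rintro (_ | ⟨u, t⟩) hex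
  · exact ⟨List.not_mem_nil, Or.inl rfl⟩
  · simp only [openingStrategy, dif_pos hex]
    exact hex.choose_spec

end Moves

section Play

variable (w) in
lemma playAux_succ (σ τ : List V → V) (n : ℕ) :
    playAux w σ τ (n + 1) =
      (if (scores w (playAux w σ τ n)).1 ≤ (scores w (playAux w σ τ n)).2
        then σ (playAux w σ τ n) else τ (playAux w σ τ n)) :: playAux w σ τ n := rfl

variable {σ τ : List V → V}

lemma playAux_one : playAux w σ τ 1 = [σ []] := by
  simp [playAux, scores]

lemma monotone_scores_playAux_fst (hw : ∀ v, 0 ≤ w v) :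
    Monotone fun n => (scores w (playAux w σ τ n)).1 :=
  monotone_nat_of_le_succ fun n => by
    rw [playAux_succ]
    exact scores_fst_le_scores_cons_fst hw _ _

variable [Fintype V]

lemma length_playAux_eq_and_nodup (hG : G.Connected) (hσ : LegalStrategy G σ)
    (hτ : LegalStrategy G τ) {n : ℕ} (hn : n ≤ Fintype.card V) :
    (playAux w σ τ n).length = n ∧ (playAux w σ τ n).Nodup := by
  induction n with
  | zero => simp [playAux]
  | succ n ih =>
    obtain ⟨hlen, hnd⟩ := ih (by omega)
    have hex := exists_legalMove hG (h := playAux w σ τ n) (by omega)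
    have hmove : LegalMove G (playAux w σ τ n)
        (if (scores w (playAux w σ τ n)).1 ≤ (scores w (playAux w σ τ n)).2
          then σ (playAux w σ τ n) else τ (playAux w σ τ n)) := by
      split
      · exact hσ _ hex
      · exact hτ _ hex
    rw [playAux_succ]
    exact ⟨by simp [hlen], List.nodup_cons.2 ⟨hmove.1, hnd⟩⟩

/-- A complete play of legal strategies takes every vertex exactly once. -/
lemma scores_playAux_card_fst_add_snd (hG : G.Connected) (hσ : LegalStrategy G σ)
    (hτ : LegalStrategy G τ) :
    (scores w (playAux w σ τ (Fintype.card V))).1 +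
      (scores w (playAux w σ τ (Fintype.card V))).2 = ∑ v, w v := by
  classical
  obtain ⟨hlen, hnd⟩ := length_playAux_eq_and_nodup (w := w) hG hσ hτ le_rfl
  have huniv : (playAux w σ τ (Fintype.card V)).toFinset = Finset.univ :=
    Finset.eq_univ_of_card _ (by rw [List.toFinset_card_of_nodup hnd, hlen])
  rw [scores_fst_add_snd, ← List.sum_toFinset _ hnd, huniv]

lemma firstScore_le_sum (hG : G.Connected) (hw : ∀ v, 0 ≤ w v) (hσ : LegalStrategy G σ)
    (hτ : LegalStrategy G τ) : firstScore w σ τ ≤ ∑ v, w v := by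
  have := scores_playAux_card_fst_add_snd (w := w) hG hσ hτ
  have := scores_snd_nonneg hw (playAux w σ τ (Fintype.card V))
  unfold firstScore
  linarith

/-- Opening with a heaviest vertex `vm` secures `w vm`, and the second player ends at most
`w vm` ahead, i.e. `F ≥ w vm` and `2 F ≥ ∑ w - w vm`. -/
lemma sum_le_three_mul_firstScore_openingStrategy (hG : G.Connected) (hw : ∀ v, 0 ≤ w v)
    {vm : V} (hvm : ∀ v, w v ≤ w vm) (hτ : LegalStrategy G τ) :
    ∑ v, w v ≤ 3 * firstScore w (openingStrategy G vm) τ := by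
  have htotal := scores_playAux_card_fst_add_snd (w := w) hG (legalStrategy_openingStrategy vm) hτ
  have hlead := scores_snd_le_fst_add hw hvm (hw vm)
    (playAux w (openingStrategy G vm) τ (Fintype.card V))
  have hopen : w vm ≤ firstScore w (openingStrategy G vm) τ := by
    calc w vm = (scores w (playAux w (openingStrategy G vm) τ 1)).1 := by
          simp [playAux_one, scores, openingStrategy]
      _ ≤ firstScore w (openingStrategy G vm) τ :=
          monotone_scores_playAux_fst hw (Fintype.card_pos_iff.2 ⟨vm⟩)
  unfold firstScore at hopen ⊢
  linarith

end Play

variable [Fintype V] in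
/-- The second player may copy the first player's strategy. -/
lemma FirstGuarantees.le_sum {c : ℝ} (hG : G.Connected) (hw : ∀ v, 0 ≤ w v)
    (hc : FirstGuarantees G w c) : c ≤ ∑ v, w v :=
  let ⟨σ, hσ, hσc⟩ := hc
  (hσc σ hσ).trans (firstScore_le_sum hG hw hσ hσ)

end ConcurrentSharing

open ConcurrentSharing in
/-- For every instance `(G,w)` of the concurrent graph sharing
game, the first player can guarantee to take vertices of total weight at least
`1/3`; that is, `v(G,w) ≥ 1/3`. -/
theorem first_player_guarantees_one_third {V : Type} [Fintype V]
    (G : SimpleGraph V) (w : V → ℝ) (hGw : IsGameInstance G w) :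
    FirstGuarantees G w (1 / 3) ∧ 1 / 3 ≤ gameValue G w := by
  obtain ⟨hG, hw01, hsum, -⟩ := hGw
  have hw : ∀ v, 0 ≤ w v := fun v => (hw01 v).1.le
  obtain ⟨vm, -, hvm⟩ := Finset.univ.exists_max_image w
    (Finset.nonempty_of_sum_ne_zero (by rw [hsum]; exact one_ne_zero))
  have hFG : FirstGuarantees G w (1 / 3) :=
    ⟨openingStrategy G vm, legalStrategy_openingStrategy vm, fun τ hτ => by
      have := sum_le_three_mul_firstScore_openingStrategy hG hw (fun v => hvm v (by simp)) hτ
      linarith⟩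
  exact ⟨hFG, le_csSup ⟨1, fun c hc => hsum ▸ hc.le_sum hG hw⟩ hFG⟩
end

section
/- Let T be a finite tree and let f : V(T) → V(T) be a function such that f(a) is adjacent to a for every vertex a of T. Then there exists an edge aa' of T with f(a) = a' and f(a') = a; that is, f has a 2-cycle. -/
/-! If `f` had no 2-cycle, `a ↦ s(a, f a)` would be an injective map from the vertices of `T` to
its edges, contradicting the fact that a tree has one edge fewer than it has vertices. -/

theorem Sym2.injective_mk_apply {α : Type*} {f : α → α} (hf : ∀ a, f (f a) ≠ a) :
    Function.Injective fun a => s(a, f a) := by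
  intro a b hab
  rcases Sym2.eq_iff.mp hab with ⟨rfl, -⟩ | ⟨rfl, hb⟩
  · rfl
  · exact absurd hb (hf b)

namespace SimpleGraph

theorem card_le_card_edgeFinset_of_adj_apply {V : Type*} [Fintype V] {G : SimpleGraph V}
    [Fintype G.edgeSet] {f : V → V} (hadj : ∀ a, G.Adj a (f a)) (hf : ∀ a, f (f a) ≠ a) :
    Fintype.card V ≤ G.edgeFinset.card :=
  Finset.card_le_card_of_injOn (fun a => s(a, f a))
    (fun a _ => mem_edgeFinset.mpr (hadj a)) (Sym2.injective_mk_apply hf).injOn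

end SimpleGraph

theorem tree_neighbor_map_has_two_cycle_general {V : Type} [Fintype V]
    (T : SimpleGraph V) (hT : T.IsTree)
    (f : V → V) (hf : ∀ a : V, T.Adj a (f a)) :
    ∃ a a' : V, T.Adj a a' ∧ f a = a' ∧ f a' = a := by
  classical
  by_contra! h
  have hle := T.card_le_card_edgeFinset_of_adj_apply hf fun a => h a (f a) (hf a) rfl
  have := hT.card_edgeFinset
  omega

/-- Let `T` be a finite tree with at least two vertices and
let `f : V(T) → V(T)` be a function such that `f a` is adjacent to `a` for
every vertex `a` of `T`. Then there exists an edge `a a'` of `T` with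
`f a = a'` and `f a' = a`; that is, `f` has a `2`-cycle. -/
theorem tree_neighbor_map_has_two_cycle {V : Type} [Fintype V]
    (T : SimpleGraph V) (hT : T.IsTree) (hcard : 1 < Fintype.card V)
    (f : V → V) (hf : ∀ a : V, T.Adj a (f a)) :
    ∃ a a' : V, T.Adj a a' ∧ f a = a' ∧ f a' = a :=
  tree_neighbor_map_has_two_cycle_general T hT f hf
end
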